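/- Kurepa's tree Λ cannot be written as a countable union Λ = ⋃_{n=1}^∞ E_n, where each set E_n ⊆ Λ has the property that ℓ(t,u) is an even number whenever t, u ∈ E_n and t ≺ u. -/

import Mathlib

/-- An element of Kurepa's tree `Λ`: an injective function `t : α → ω` with countable
ordinal domain `α` and coinfinite range.  The function is represented as a total function
on ordinals which takes the junk value `0` outside of the domain. -/
structure Lambda : Type 1 where
  toFun : Ordinal.{0} → ℕ
  dom : Ordinal.{0}
  countable : dom.card ≤ Cardinal.aleph0
  inj : ∀ β γ, β < dom → γ < dom → toFun β = toFun γ → β = γ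
  coinfinite : {n : ℕ | ∀ β, β < dom → toFun β ≠ n}.Infinite
  junk : ∀ β, ¬ β < dom → toFun β = 0

/-- The tree order on `Λ`: `s ≼ t` iff `t` extends `s`. -/
def Lambda.le (s t : Lambda) : Prop :=
  s.dom ≤ t.dom ∧ ∀ β, β < s.dom → s.toFun β = t.toFun β

/-- The strict tree order on `Λ`. -/
def Lambda.lt (s t : Lambda) : Prop := Lambda.le s t ∧ s ≠ t

/-- `r ≺ s` for `r ∈ Λ ∪ {0}` (`none` plays the role of the extra least element `0`). -/
def precLt : Option Lambda → Lambda → Prop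
  | none, _ => True
  | some r, s => Lambda.lt r s

/-- The interval `(r, t] = {s ∈ Λ : r ≺ s ≼ t}`, with `r ∈ Λ ∪ {0}`. -/
def lamIoc (r : Option Lambda) (t : Lambda) : Set Lambda :=
  {s | precLt r s ∧ Lambda.le s t}

/-- The position of the minimum of `t` on the ordinal interval `[δ, β)`. -/
noncomputable def minPos (t : Ordinal.{0} → ℕ) (δ β : Ordinal.{0}) : Ordinal.{0} :=
  sInf {ξ | δ ≤ ξ ∧ ξ < β ∧ ∀ η, δ ≤ η → η < β → t ξ ≤ t η}

lemma minPos_lt (t : Ordinal.{0} → ℕ) {δ β : Ordinal.{0}} (h : δ < β) : minPos t δ β < β := by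
  have hne : {ξ : Ordinal.{0} | δ ≤ ξ ∧ ξ < β ∧ ∀ η, δ ≤ η → η < β → t ξ ≤ t η}.Nonempty := by
    have h1 : {n : ℕ | ∃ ξ : Ordinal.{0}, δ ≤ ξ ∧ ξ < β ∧ t ξ = n}.Nonempty :=
      ⟨t δ, δ, le_refl _, h, rfl⟩
    obtain ⟨ξ, hξ1, hξ2, hξ3⟩ := Nat.sInf_mem h1
    refine ⟨ξ, hξ1, hξ2, fun η h1' h2' => ?_⟩
    rw [hξ3]
    exact Nat.sInf_le ⟨η, h1', h2', rfl⟩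
  obtain ⟨ξ, hξ⟩ := hne
  calc minPos t δ β ≤ ξ := csInf_le (OrderBot.bddBelow _) hξ
    _ < β := hξ.2.1

/-- The sequence `τ` computed from the starting ordinal `β₀` downwards: `τ` is obtained by
repeatedly passing from `β` to the position of the minimum of `t` on `[δ, β)`, stopping upon
reaching `δ`.  The resulting finite sequence `(β_k, …, β_1)` is recorded as a list in the
order `[β_k, …, β_1]` (so concatenation of the lists corresponds to `⌢`). -/
noncomputable def tauFrom (δ : Ordinal.{0}) (t : Ordinal.{0} → ℕ) : Ordinal.{0} → List Ordinal.{0} :=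
  WellFounded.fix wellFounded_lt
    (fun β IH => if h : δ < β then IH (minPos t δ β) (minPos_lt t h) ++ [minPos t δ β] else [])

/-- The finite sequence `τ(s,t)` of ordinals, for `s ≼ t` in `Λ`. -/
noncomputable def tau (s t : Lambda) : List Ordinal.{0} :=
  tauFrom s.dom t.toFun t.dom

/-- `ℓ(s,t)`, the length of `τ(s,t)`. -/
noncomputable def ell (s t : Lambda) : ℕ := (tau s t).length

/-- The underlying set of the `Λ`-duplicate: `D = Λ × {1, -1}`. -/
abbrev Dup : Type 1 := Lambda × ℤˣ

/-- The basic open sets `W(r,t,i)` of the `Λ`-duplicate. -/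
noncomputable def Wset (r : Option Lambda) (t : Lambda) (i : ℤˣ) : Set Dup :=
  {q | q.1 ∈ lamIoc r t ∧ q.2 = (-1) ^ ell q.1 t * i}

/-- The collection of all basic open sets `W(r,t,i)` with `r ≺ t`. -/
noncomputable def WBasis : Set (Set Dup) :=
  {S | ∃ (r : Option Lambda) (t : Lambda) (i : ℤˣ), precLt r t ∧ S = Wset r t i}

/-- The topology of the `Λ`-duplicate, generated by the basic sets `W(r,t,i)`. -/
noncomputable instance : TopologicalSpace Dup := TopologicalSpace.generateFrom WBasis

/-!
Diagonalise against the sets `E n` with a fusion sequence `t₀ ≼ t₁ ≼ ⋯` and bounds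
`B₀ < B₁ < ⋯`. At stage `n`, let `t_{n+1}` extend `t_n` so that all new values exceed `B_n` and
the first new value is the least of them, choosing `t_{n+1} ∈ E n` whenever `E n` contains such
an extension; then pick `B_{n+1}` above that first value and outside the range of `t_{n+1}`.
The union `t_ω` avoids every `B_n`, so it lies in `Λ`, and it extends each `t_n` in the same
way. If `t_ω ∈ E N`, the choice at stage `N` puts `t_{N+1}` in `E N` as well; but the minimum of
`t_ω` above `dom t_{N+1}` is attained at `dom t_{N+1}`, so `ℓ(t_{N+1}, t_ω) = 1` is odd.
-/

namespace Lambda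

theorem le.refl (t : Lambda) : t.le t := ⟨le_rfl, fun _ _ => rfl⟩

theorem le.trans {a b c : Lambda} (hab : a.le b) (hbc : b.le c) : a.le c :=
  ⟨hab.1.trans hbc.1, fun β hβ => (hab.2 β hβ).trans (hbc.2 β (hβ.trans_le hab.1))⟩

theorem exists_gt_forall_ne (t : Lambda) (a : ℕ) :
    ∃ v, a < v ∧ ∀ β < t.dom, t.toFun β ≠ v := by
  obtain ⟨v, hv, hav⟩ := t.coinfinite.exists_gt a
  exact ⟨v, hav, hv⟩

def empty : Lambda where
  toFun _ := 0
  dom := 0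
  countable := by simp
  inj β _ hβ := absurd hβ not_lt_zero
  coinfinite := by simp [Set.infinite_univ]
  junk _ _ := rfl

noncomputable def snoc (t : Lambda) (v : ℕ) (hv : ∀ β < t.dom, t.toFun β ≠ v) : Lambda where
  toFun β := if β < t.dom then t.toFun β else if β = t.dom then v else 0
  dom := t.dom + 1
  countable := by
    rw [Ordinal.card_add, Ordinal.card_one]
    exact Cardinal.add_le_aleph0.2 ⟨t.countable, Cardinal.one_le_aleph0⟩
  inj β γ hβ hγ h := by
    rw [Order.lt_add_one_iff] at hβ hγ
    rcases hβ.lt_or_eq with hβ | rfl <;> rcases hγ.lt_or_eq with hγ | rfl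
    · simp only [hβ, hγ, if_true] at h
      exact t.inj β γ hβ hγ h
    · simp only [hβ, lt_irrefl, if_true, if_false] at h
      exact absurd h (hv β hβ)
    · simp only [hγ, lt_irrefl, if_true, if_false] at h
      exact absurd h.symm (hv γ hγ)
    · rfl
  coinfinite := by
    refine (t.coinfinite.sdiff (Set.finite_singleton v)).mono ?_
    rintro n ⟨hn, hnv⟩ β hβ
    rw [Order.lt_add_one_iff] at hβ
    rcases hβ.lt_or_eq with hβ | rfl
    · simpa [hβ] using hn β hβ
    · simpa [eq_comm] using hnv
  junk β hβ := by
    rw [Order.lt_add_one_iff, not_le] at hβ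
    simp [hβ.not_gt, hβ.ne']

section limit

variable {t : ℕ → Lambda}

theorem le_of_chain (hchain : ∀ n, (t n).le (t (n + 1))) {m n : ℕ} (h : m ≤ n) :
    (t m).le (t n) := by
  induction h with
  | refl => exact le.refl _
  | step _ ih => exact ih.trans (hchain _)

open Classical in
noncomputable def limitFun (t : ℕ → Lambda) (β : Ordinal.{0}) : ℕ :=
  if h : ∃ n, β < (t n).dom then (t (Nat.find h)).toFun β else 0

theorem limitFun_eq (hchain : ∀ n, (t n).le (t (n + 1))) {n : ℕ} {β : Ordinal.{0}}
    (hβ : β < (t n).dom) : limitFun t β = (t n).toFun β := by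
  classical
  have h : ∃ n, β < (t n).dom := ⟨n, hβ⟩
  rw [limitFun, dif_pos h]
  exact (le_of_chain hchain (Nat.find_min' h hβ)).2 β (Nat.find_spec h)

noncomputable def limit (t : ℕ → Lambda) (hchain : ∀ n, (t n).le (t (n + 1)))
    (hfresh : {v | ∀ n, ∀ β < (t n).dom, (t n).toFun β ≠ v}.Infinite) : Lambda where
  toFun := limitFun t
  dom := ⨆ n, (t n).dom
  countable := Ordinal.card_iSup_le Cardinal.mk_nat.le fun n => (t n).countable
  inj β γ hβ hγ h := by
    obtain ⟨m, hm⟩ := Ordinal.lt_iSup_iff.1 hβ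
    obtain ⟨n, hn⟩ := Ordinal.lt_iSup_iff.1 hγ
    have hβ' := hm.trans_le (le_of_chain hchain (le_max_left m n)).1
    have hγ' := hn.trans_le (le_of_chain hchain (le_max_right m n)).1
    rw [limitFun_eq hchain hβ', limitFun_eq hchain hγ'] at h
    exact (t (max m n)).inj β γ hβ' hγ' h
  coinfinite := hfresh.mono fun v hv β hβ => by
    obtain ⟨n, hn⟩ := Ordinal.lt_iSup_iff.1 hβ
    rw [limitFun_eq hchain hn]
    exact hv n β hn
  junk β hβ := dif_neg fun h => hβ (Ordinal.lt_iSup_iff.2 h)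

variable (hchain : ∀ n, (t n).le (t (n + 1)))
  (hfresh : {v | ∀ n, ∀ β < (t n).dom, (t n).toFun β ≠ v}.Infinite)

theorem lt_limit_dom_iff {β : Ordinal.{0}} :
    β < (limit t hchain hfresh).dom ↔ ∃ n, β < (t n).dom :=
  Ordinal.lt_iSup_iff

theorem le_limit (n : ℕ) : (t n).le (limit t hchain hfresh) :=
  ⟨Ordinal.le_iSup _ n, fun _ hβ => (limitFun_eq hchain hβ).symm⟩

end limit

end Lambda

theorem minPos_eq_left {t : Ordinal.{0} → ℕ} {δ β : Ordinal.{0}} (h : δ < β)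
    (hmin : ∀ η, δ < η → η < β → t δ ≤ t η) : minPos t δ β = δ := by
  have hδ : δ ∈ {ξ | δ ≤ ξ ∧ ξ < β ∧ ∀ η, δ ≤ η → η < β → t ξ ≤ t η} :=
    ⟨le_rfl, h, fun η hδη hηβ => hδη.eq_or_lt.elim (fun h => h ▸ le_rfl) (hmin η · hηβ)⟩
  exact le_antisymm (csInf_le (OrderBot.bddBelow _) hδ) (le_csInf ⟨δ, hδ⟩ fun _ hξ => hξ.1)

theorem tauFrom_eq (δ : Ordinal.{0}) (t : Ordinal.{0} → ℕ) (β : Ordinal.{0}) :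
    tauFrom δ t β =
      if δ < β then tauFrom δ t (minPos t δ β) ++ [minPos t δ β] else [] := by
  rw [tauFrom, WellFounded.fix_eq, dite_eq_ite]

theorem ell_eq_one {s u : Lambda} (h : s.dom < u.dom)
    (hmin : ∀ ξ, s.dom < ξ → ξ < u.dom → u.toFun s.dom < u.toFun ξ) : ell s u = 1 := by
  rw [ell, tau, tauFrom_eq, if_pos h, minPos_eq_left h fun η h₁ h₂ => (hmin η h₁ h₂).le,
    tauFrom_eq, if_neg (lt_irrefl _)]
  rfl

structure ExtendsAbove (t : Lambda) (B : ℕ) (u : Lambda) : Prop where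
  le : t.le u
  dom_lt : t.dom < u.dom
  bound_lt : ∀ ξ, t.dom ≤ ξ → ξ < u.dom → B < u.toFun ξ
  head_lt : ∀ ξ, t.dom < ξ → ξ < u.dom → u.toFun t.dom < u.toFun ξ

namespace ExtendsAbove

variable {t u v : Lambda} {B B' : ℕ}

theorem lt (h : ExtendsAbove t B u) : t.lt u :=
  ⟨h.le, ne_of_apply_ne Lambda.dom h.dom_lt.ne⟩

theorem ell_eq_one (h : ExtendsAbove t B u) : ell t u = 1 :=
  _root_.ell_eq_one h.dom_lt h.head_lt

theorem forall_ne (h : ExtendsAbove t B u) (hB : ∀ β < t.dom, t.toFun β ≠ B) :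
    ∀ β < u.dom, u.toFun β ≠ B := fun β hβ => by
  rcases lt_or_ge β t.dom with hβt | hβt
  · exact h.le.2 β hβt ▸ hB β hβt
  · exact (h.bound_lt β hβt hβ).ne'

theorem trans (h₁ : ExtendsAbove t B u) (h₂ : ExtendsAbove u B' v) (hB : B ≤ B')
    (hhead : u.toFun t.dom < B') : ExtendsAbove t B v where
  le := h₁.le.trans h₂.le
  dom_lt := h₁.dom_lt.trans h₂.dom_lt
  bound_lt ξ hξt hξv := by
    rcases lt_or_ge ξ u.dom with hξu | hξu
    · exact h₂.le.2 ξ hξu ▸ h₁.bound_lt ξ hξt hξu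
    · exact hB.trans_lt (h₂.bound_lt ξ hξu hξv)
  head_lt ξ hξt hξv := by
    rw [← h₂.le.2 _ h₁.dom_lt]
    rcases lt_or_ge ξ u.dom with hξu | hξu
    · exact h₂.le.2 ξ hξu ▸ h₁.head_lt ξ hξt hξu
    · exact hhead.trans (h₂.bound_lt ξ hξu hξv)

theorem of_forall_lt_dom (hle : t.le u) (hlt : t.dom < u.dom)
    (h : ∀ ξ < u.dom, ∃ v, ExtendsAbove t B v ∧ v.le u ∧ ξ < v.dom) : ExtendsAbove t B u where
  le := hle
  dom_lt := hlt
  bound_lt ξ hξt hξu := by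
    obtain ⟨v, hv, hvu, hξv⟩ := h ξ hξu
    exact hvu.2 ξ hξv ▸ hv.bound_lt ξ hξt hξv
  head_lt ξ hξt hξu := by
    obtain ⟨v, hv, hvu, hξv⟩ := h ξ hξu
    rw [← hvu.2 ξ hξv, ← hvu.2 _ hv.dom_lt]
    exact hv.head_lt ξ hξt hξv

end ExtendsAbove

theorem Lambda.extendsAbove_snoc (t : Lambda) {B v : ℕ} (hv : ∀ β < t.dom, t.toFun β ≠ v)
    (hBv : B < v) : ExtendsAbove t B (t.snoc v hv) := by
  have hdom : ∀ ξ, t.dom ≤ ξ → ξ < t.dom + 1 → ξ = t.dom := fun ξ h₁ h₂ =>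
    le_antisymm (Order.lt_add_one_iff.1 h₂) h₁
  refine ⟨⟨le_self_add, fun β hβ => (if_pos hβ).symm⟩, Order.lt_add_one_iff.2 le_rfl,
    fun ξ h₁ h₂ => ?_, fun ξ h₁ h₂ => absurd (hdom ξ h₁.le h₂) h₁.ne'⟩
  obtain rfl := hdom ξ h₁ h₂
  simpa [Lambda.snoc] using hBv

structure IsFusionStep (E : Set Lambda) (p q : Lambda × ℕ) : Prop where
  extendsAbove : ExtendsAbove p.1 p.2 q.1
  bound_lt : p.2 < q.2
  head_lt : q.1.toFun p.1.dom < q.2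
  forall_ne : ∀ β < q.1.dom, q.1.toFun β ≠ q.2
  mem_of_exists : (∃ u ∈ E, ExtendsAbove p.1 p.2 u) → q.1 ∈ E

theorem exists_isFusionStep (E : Set Lambda) (p : Lambda × ℕ) : ∃ q, IsFusionStep E p q := by
  have of_extendsAbove (u : Lambda) (hu : ExtendsAbove p.1 p.2 u)
      (hmem : (∃ u ∈ E, ExtendsAbove p.1 p.2 u) → u ∈ E) : ∃ q, IsFusionStep E p q := by
    obtain ⟨B', hB', hne⟩ := u.exists_gt_forall_ne (max p.2 (u.toFun p.1.dom))
    exact ⟨(u, B'), hu, (le_max_left ..).trans_lt hB', (le_max_right ..).trans_lt hB', hne, hmem⟩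
  by_cases hE : ∃ u ∈ E, ExtendsAbove p.1 p.2 u
  · obtain ⟨u, huE, hu⟩ := hE
    exact of_extendsAbove u hu fun _ => huE
  · obtain ⟨v, hv, hne⟩ := p.1.exists_gt_forall_ne p.2
    exact of_extendsAbove _ (p.1.extendsAbove_snoc hne hv) fun h => absurd h hE

noncomputable def fusionSeq (E : ℕ → Set Lambda) : ℕ → Lambda × ℕ
  | 0 => (Lambda.empty, 0)
  | n + 1 => Classical.choose (exists_isFusionStep (E n) (fusionSeq E n))

section fusionSeq

variable (E : ℕ → Set Lambda)

theorem isFusionStep_fusionSeq (n : ℕ) :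
    IsFusionStep (E n) (fusionSeq E n) (fusionSeq E (n + 1)) :=
  Classical.choose_spec (exists_isFusionStep (E n) (fusionSeq E n))

theorem fusionSeq_le_succ (n : ℕ) : (fusionSeq E n).1.le (fusionSeq E (n + 1)).1 :=
  (isFusionStep_fusionSeq E n).extendsAbove.le

theorem strictMono_fusionSeq_snd : StrictMono fun n => (fusionSeq E n).2 :=
  strictMono_nat_of_lt_succ fun n => (isFusionStep_fusionSeq E n).bound_lt

theorem extendsAbove_fusionSeq {n m : ℕ} (h : n < m) :
    ExtendsAbove (fusionSeq E n).1 (fusionSeq E n).2 (fusionSeq E m).1 ∧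
      (fusionSeq E m).1.toFun (fusionSeq E n).1.dom < (fusionSeq E m).2 := by
  induction m, h using Nat.le_induction with
  | base =>
    exact ⟨(isFusionStep_fusionSeq E n).extendsAbove, (isFusionStep_fusionSeq E n).head_lt⟩
  | succ m hnm ih =>
    have hstep := isFusionStep_fusionSeq E m
    have hB := (strictMono_fusionSeq_snd E).monotone (Nat.le_of_succ_le hnm)
    refine ⟨ih.1.trans hstep.extendsAbove hB ih.2, ?_⟩
    rw [← hstep.extendsAbove.le.2 _ ih.1.dom_lt]
    exact ih.2.trans hstep.bound_lt

theorem fusionSeq_forall_ne (n m : ℕ) :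
    ∀ β < (fusionSeq E m).1.dom, (fusionSeq E m).1.toFun β ≠ (fusionSeq E n).2 := by
  have hn : ∀ β < (fusionSeq E n).1.dom, (fusionSeq E n).1.toFun β ≠ (fusionSeq E n).2 := by
    cases n with
    | zero => exact fun β hβ => absurd hβ not_lt_zero
    | succ n => exact (isFusionStep_fusionSeq E n).forall_ne
  rcases le_or_gt m n with hmn | hnm
  · intro β hβ
    rw [(Lambda.le_of_chain (fusionSeq_le_succ E) hmn).2 β hβ]
    exact hn β (hβ.trans_le (Lambda.le_of_chain (fusionSeq_le_succ E) hmn).1)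
  · exact (extendsAbove_fusionSeq E hnm).1.forall_ne hn

noncomputable def fusionLimit : Lambda :=
  Lambda.limit (fun n => (fusionSeq E n).1) (fusionSeq_le_succ E) <|
    Set.infinite_of_injective_forall_mem (strictMono_fusionSeq_snd E).injective
      fun n m => fusionSeq_forall_ne E n m

theorem extendsAbove_fusionLimit (n : ℕ) :
    ExtendsAbove (fusionSeq E n).1 (fusionSeq E n).2 (fusionLimit E) := by
  refine .of_forall_lt_dom (Lambda.le_limit _ _ n)
    ((extendsAbove_fusionSeq E n.lt_succ_self).1.dom_lt.trans_le (Lambda.le_limit _ _ (n + 1)).1)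
    fun ξ hξ => ?_
  obtain ⟨m, hm⟩ := (Lambda.lt_limit_dom_iff _ _).1 hξ
  have hnm : n < max m (n + 1) := n.lt_succ_self.trans_le (le_max_right _ _)
  exact ⟨_, (extendsAbove_fusionSeq E hnm).1, Lambda.le_limit _ _ _,
    hm.trans_le (Lambda.le_of_chain (fusionSeq_le_succ E) (le_max_left _ _)).1⟩

end fusionSeq

/-- Kurepa's tree `Λ` is not a countable union of sets `E n` such that `ℓ(t,u)` is even
whenever `t, u ∈ E n` and `t ≺ u`. -/
theorem no_countable_even_decomposition :
    ¬ ∃ E : ℕ → Set Lambda,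
        (∀ t : Lambda, ∃ n, t ∈ E n) ∧
        (∀ n, ∀ t ∈ E n, ∀ u ∈ E n, Lambda.lt t u → Even (ell t u)) := by
  rintro ⟨E, hcover, heven⟩
  obtain ⟨N, hN⟩ := hcover (fusionLimit E)
  have hmem : (fusionSeq E (N + 1)).1 ∈ E N :=
    (isFusionStep_fusionSeq E N).mem_of_exists ⟨_, hN, extendsAbove_fusionLimit E N⟩
  have hext := extendsAbove_fusionLimit E (N + 1)
  have hparity := heven N _ hmem _ hN hext.lt
  rw [hext.ell_eq_one] at hparity
  exact Nat.not_even_one hparity
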